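/- Let x_p(n), for 0 < p < 1, be the largest k ≤ n-2 with 2^k·(n-3)!·(2n-k-4)!/(2·(2n-5)!·(n-k-2)!) ≥ 1−p. Then x_p(n)/√(−4·ln(1−p)·n) → 1 as n → ∞. -/

import Mathlib

/-!
Write `F(n, k)` (`tailRatio n k` below) for the ratio of factorials in `percentile`. Its
consecutive quotients give `F(n, k) = ∏_{j<k} (1 - j / (2n - j - 4))`, and bounding each factor
by exponentials, `exp (-k(k-1) / (4(n-k-1))) ≤ F(n, k) ≤ exp (-k(k-1) / (4n))`.
With `c = -log (1 - p)`, every `k` with `F(n, k) ≥ 1 - p = exp (-c)` thus has `k(k-1) ≤ 4cn`,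
while every `k` with `k(k-1) ≤ 4c(n-k-1)` qualifies. So `x_p(n)` stays within distance `2c + 2`
of `√(4cn)`, which tends to infinity.
-/

open Nat Filter

/-- The `p`-percentile of the distance between two leaves in a fully resolved unrooted
phylogenetic tree with `n` leaves. -/
noncomputable def percentile (p : ℝ) (n : ℕ) : ℕ :=
  sSup {k : ℕ | k ≤ n - 2 ∧
    1 - p ≤ (2 ^ k * ((n - 3)! : ℝ) * ((2 * n - k - 4)! : ℝ))
        / (2 * ((2 * n - 5)! : ℝ) * ((n - k - 2)! : ℝ))}

open Finset

lemma Real.exp_neg_div_sub_le_one_sub_div {a b : ℝ} (ha : 0 ≤ a) (hab : a < b) :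
    Real.exp (-(a / (b - a))) ≤ 1 - a / b := by
  have hb : 0 < b := ha.trans_lt hab
  have hba : 0 < b - a := sub_pos.2 hab
  have hinv : 1 - a / b = (1 + a / (b - a))⁻¹ := by
    field_simp
    ring
  rw [hinv, Real.exp_neg]
  exact inv_anti₀ (by positivity) (by linarith [Real.add_one_le_exp (a / (b - a))])

lemma sum_range_natCast_id (k : ℕ) : ∑ j ∈ range k, (j : ℝ) = k * (k - 1) / 2 := by
  induction k with
  | zero => simp
  | succ k ih => rw [sum_range_succ, ih]; push_cast; ring

lemma prod_range_exp_neg_div (k : ℕ) (D : ℝ) :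
    ∏ j ∈ range k, Real.exp (-(j / D)) = Real.exp (-(k * (k - 1) / (2 * D))) := by
  rw [← Real.exp_sum, sum_neg_distrib, ← sum_div, sum_range_natCast_id, div_div]

noncomputable def tailRatio (n k : ℕ) : ℝ :=
  (2 ^ k * ((n - 3)! : ℝ) * ((2 * n - k - 4)! : ℝ))
    / (2 * ((2 * n - 5)! : ℝ) * ((n - k - 2)! : ℝ))

section tailRatio

variable {n k : ℕ}

lemma tailRatio_zero (hn : 3 ≤ n) : tailRatio n 0 = 1 := by
  obtain ⟨m, rfl⟩ : ∃ m, n = m + 3 := ⟨n - 3, by omega⟩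
  have h2m : 2 * (m + 3) - 0 - 4 = (2 * m + 1) + 1 := by omega
  simp only [tailRatio, h2m, factorial_succ, show 2 * (m + 3) - 5 = 2 * m + 1 by omega,
    show m + 3 - 0 - 2 = m + 1 by omega, Nat.add_sub_cancel, pow_zero]
  push_cast
  field_simp
  ring

lemma tailRatio_succ (hk : k + 3 ≤ n) :
    tailRatio n (k + 1) = tailRatio n k * (1 - k / (2 * n - k - 4)) := by
  obtain ⟨m, rfl⟩ : ∃ m, n = k + 3 + m := ⟨n - (k + 3), by omega⟩
  have hden : 2 * ((k + 3 + m : ℕ) : ℝ) - k - 4 = k + 2 * m + 2 := by push_cast; ring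
  rw [hden]
  simp only [tailRatio, show 2 * (k + 3 + m) - k - 4 = (k + 2 * m + 1) + 1 by omega,
    show k + 3 + m - k - 2 = m + 1 by omega,
    show 2 * (k + 3 + m) - (k + 1) - 4 = k + 2 * m + 1 by omega,
    show k + 3 + m - (k + 1) - 2 = m by omega, factorial_succ, pow_succ]
  push_cast
  field_simp
  ring

lemma tailRatio_eq_prod (hn : 3 ≤ n) (hk : k + 2 ≤ n) :
    tailRatio n k = ∏ j ∈ range k, (1 - j / (2 * n - j - 4 : ℝ)) := by
  induction k with
  | zero => simpa using tailRatio_zero hn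
  | succ k ih => rw [prod_range_succ, ← ih (by omega), tailRatio_succ (by omega)]

lemma tailRatio_le_exp (hn : 3 ≤ n) (hk : k + 2 ≤ n) :
    tailRatio n k ≤ Real.exp (-(k * (k - 1) / (4 * n))) := by
  rw [tailRatio_eq_prod hn hk, show (4 : ℝ) * n = 2 * (2 * n) by ring,
    ← prod_range_exp_neg_div]
  have hjn : ∀ j ∈ range k, (j : ℝ) + 3 ≤ n := fun j hj => by
    exact_mod_cast (by have := mem_range.1 hj; omega : j + 3 ≤ n)
  refine prod_le_prod (fun j hj => ?_) (fun j hj => ?_) <;> have := hjn j hj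
  · rw [sub_nonneg, div_le_one (by linarith)]
    linarith
  · refine (Real.one_sub_le_exp_neg _).trans (Real.exp_le_exp.2 (neg_le_neg ?_))
    exact div_le_div_of_nonneg_left j.cast_nonneg (by linarith) (by linarith)

lemma exp_le_tailRatio (hn : 3 ≤ n) (hk : k + 2 ≤ n) :
    Real.exp (-(k * (k - 1) / (4 * (n - k - 1)))) ≤ tailRatio n k := by
  rw [tailRatio_eq_prod hn hk, show (4 : ℝ) * (n - k - 1) = 2 * (2 * (n - k - 1)) by ring,
    ← prod_range_exp_neg_div]
  refine prod_le_prod (fun j _ => (Real.exp_pos _).le) (fun j hj => ?_)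
  have hjk : (j : ℝ) + 1 ≤ k := by exact_mod_cast mem_range.1 hj
  have hkn : (k : ℝ) + 2 ≤ n := by exact_mod_cast hk
  refine le_trans ?_ (Real.exp_neg_div_sub_le_one_sub_div j.cast_nonneg (by linarith))
  refine Real.exp_le_exp.2 (neg_le_neg ?_)
  exact div_le_div_of_nonneg_left j.cast_nonneg (by linarith) (by linarith)

end tailRatio

section percentile

variable {p c : ℝ} {n k : ℕ}

lemma le_percentile_of_mul_le (hc0 : 0 ≤ c) (hc : 1 - p = Real.exp (-c)) (hn : 3 ≤ n)
    (h : (k : ℝ) * (k - 1) ≤ 4 * c * (n - k - 1)) : k ≤ percentile p n := by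
  have hkn : k + 2 ≤ n := by
    by_contra! hkn
    have : (n : ℝ) ≤ k + 1 := by exact_mod_cast (by omega : n ≤ k + 1)
    have : (3 : ℝ) ≤ k + 1 := by exact_mod_cast (by omega : 3 ≤ k + 1)
    nlinarith
  refine le_csSup ⟨n - 2, fun _ hm => hm.1⟩ ⟨by omega, ?_⟩
  refine hc ▸ (Real.exp_le_exp.2 ?_).trans (exp_le_tailRatio hn hkn)
  have : (0 : ℝ) < n - k - 1 := by
    have : (k : ℝ) + 2 ≤ n := by exact_mod_cast hkn
    linarith
  rw [neg_le_neg_iff, div_le_iff₀ (by positivity)]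
  linarith

lemma mul_le_of_le_tailRatio (hc : 1 - p = Real.exp (-c)) (hn : 3 ≤ n) (hk : k + 2 ≤ n)
    (h : 1 - p ≤ tailRatio n k) : (k : ℝ) * (k - 1) ≤ 4 * c * n := by
  have := hc ▸ h.trans (tailRatio_le_exp hn hk)
  rw [Real.exp_le_exp, neg_le_neg_iff, div_le_iff₀ (by positivity)] at this
  linarith

lemma percentile_le_sqrt_add_one (hc0 : 0 ≤ c) (hc : 1 - p = Real.exp (-c)) (hn : 3 ≤ n) :
    (percentile p n : ℝ) ≤ √(4 * c * n) + 1 := by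
  have hs := Real.sq_sqrt (by positivity : 0 ≤ 4 * c * n)
  have hs0 := Real.sqrt_nonneg (4 * c * n)
  suffices percentile p n ≤ ⌊√(4 * c * n) + 1⌋₊ from
    (Nat.cast_le.2 this).trans (Nat.floor_le (by positivity))
  refine csSup_le' fun m ⟨hm, hmp⟩ => Nat.le_floor ?_
  have := mul_le_of_le_tailRatio hc hn (by omega) hmp
  nlinarith

lemma sqrt_sub_le_percentile (hc0 : 0 ≤ c) (hc : 1 - p = Real.exp (-c)) (hn : 3 ≤ n) :
    √(4 * c * n) - (2 * c + 2) ≤ percentile p n := by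
  set s := √(4 * c * n)
  have hs : s ^ 2 = 4 * c * n := Real.sq_sqrt (by positivity)
  set k := ⌊s - 2 * c - 1⌋₊
  have hk : s - 2 * c - 2 < k := by linarith [Nat.sub_one_lt_floor (s - 2 * c - 1)]
  rcases k.eq_zero_or_pos with hk0 | hk0
  · rw [hk0, Nat.cast_zero] at hk
    linarith [(percentile p n).cast_nonneg (α := ℝ)]
  have hk1 : (1 : ℝ) ≤ k := by exact_mod_cast hk0
  have hks : (k : ℝ) ≤ s - 2 * c - 1 := Nat.floor_le (by linarith [Nat.floor_pos.1 hk0])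
  -- with `t = s - 2c - 1`: `4c(n - t - 1) - t² = (2c - 1)² + 2(s - 1)`
  have hkey : (k : ℝ) * (k - 1) ≤ 4 * c * (n - k - 1) := by nlinarith
  have := le_percentile_of_mul_le hc0 hc hn hkey
  linarith [(Nat.cast_le (α := ℝ)).2 this]

end percentile

lemma Asymptotics.tendsto_div_of_abs_sub_le {α : Type*} {l : Filter α} {x s : α → ℝ} {C : ℝ}
    (h : ∀ᶠ a in l, |x a - s a| ≤ C) (hs : Tendsto s l atTop) :
    Tendsto (fun a => x a / s a) l (nhds 1) := by
  have hbig : (fun a => x a - s a) =O[l] (fun _ => (1 : ℝ)) :=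
    Asymptotics.IsBigO.of_bound C (by simpa using h)
  have hlittle : (fun _ => (1 : ℝ)) =o[l] s :=
    (Asymptotics.isLittleO_one_left_iff ℝ).2 (tendsto_norm_atTop_atTop.comp hs)
  exact (Asymptotics.isEquivalent_iff_tendsto_one (hs.eventually_ne_atTop 0)).1
    (hbig.trans_isLittleO hlittle)

theorem percentile_limit (p : ℝ) (hp0 : 0 < p) (hp1 : p < 1) :
    Tendsto (fun n : ℕ => (percentile p n : ℝ) / Real.sqrt (-4 * Real.log (1 - p) * n))
      atTop (nhds 1) := by
  set c := -Real.log (1 - p) with hc_def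
  have hc0 : 0 < c := neg_pos.2 (Real.log_neg (by linarith) (by linarith))
  have hc : 1 - p = Real.exp (-c) := by rw [hc_def, neg_neg, Real.exp_log (by linarith)]
  have h4c : -4 * Real.log (1 - p) = 4 * c := by rw [hc_def]; ring
  simp only [h4c]
  refine Asymptotics.tendsto_div_of_abs_sub_le (C := 2 * c + 2) ?_ ?_
  · filter_upwards [eventually_ge_atTop 3] with n hn
    have := percentile_le_sqrt_add_one hc0.le hc hn
    have := sqrt_sub_le_percentile hc0.le hc hn
    rw [abs_le]
    constructor <;> linarith
  · exact Real.tendsto_sqrt_atTop.comp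
      (tendsto_natCast_atTop_atTop.const_mul_atTop (by positivity))
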